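/- Let J = (j_1,…,j_n) be an admissible sequence with excess vector γ(J) = (l_1,…,l_n). Then in the algebra 𝓕₂*, the monomial ξ̄_1^{l_1} · ξ̄_2^{l_2} ⋯ ξ̄_n^{l_n} equals S_J plus a sum of basis elements S_I with I > J in the right lexicographic order; in particular the coefficient of S_J in this monomial is 1 and the coefficient of S_I is 0 for every I < J. -/
import Mathlib


/-- The overlapping shuffle product of two finite sequences, as a multiset
(counting multiplicities). -/
def osp : List ℕ → List ℕ → Multiset (List ℕ)
  | A, [] => {A}
  | [], B => {B}
  | a :: A, b :: B =>
      ((osp A (b :: B)).map (a :: ·)) +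
      ((osp (a :: A) B).map (b :: ·)) +
      ((osp A B).map ((a + b) :: ·))
termination_by A B => A.length + B.length
decreasing_by all_goals (simp only [List.length_cons]; omega)

/-- The underlying free module over `ZMod 2` on the set of finite sequences
(this carries the mod 2 dual Leibniz--Hopf algebra `𝓕₂*`). -/
abbrev F2D : Type := (List ℕ) →₀ ZMod 2

/-- The basis element `S_I`. -/
noncomputable def sElem (I : List ℕ) : F2D := Finsupp.single I 1

/-- The element of `𝓕₂*` associated to a multiset of sequences, keeping
multiplicities mod 2. -/
noncomputable def ofMS (m : Multiset (List ℕ)) : F2D := (m.map sElem).sum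

/-- The bilinear product of `𝓕₂*`: on basis elements,
`S_I · S_J = Σ_K (multiplicity of K in osp I J mod 2) • S_K`. -/
noncomputable def fmul (x y : F2D) : F2D :=
  x.sum fun I a => y.sum fun J b => (a * b) • ofMS (osp I J)

/-- Powers in `𝓕₂*` (with `S_{()}` the unit). -/
noncomputable def fpow (x : F2D) : ℕ → F2D
  | 0 => sElem []
  | n + 1 => fmul x (fpow x n)

/-- Product of a list of elements of `𝓕₂*` (with `S_{()}` the unit). -/
noncomputable def fprod : List F2D → F2D
  | [] => sElem []
  | x :: xs => fmul x (fprod xs)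

/-- The strict right lexicographic order: longer sequences are greater, and
sequences of equal length are compared at the rightmost entry where they
differ. -/
def rlt (I J : List ℕ) : Prop :=
  I.length < J.length ∨ (I.length = J.length ∧ List.Lex (· < ·) I.reverse J.reverse)

/-- A finite sequence `(j_1,…,j_n)` of positive integers is admissible if
`j_k ≥ 2 j_{k+1}` for all `1 ≤ k < n`. -/
def Admissible (J : List ℕ) : Prop :=
  (∀ j ∈ J, 0 < j) ∧ List.Chain' (fun x y => 2 * y ≤ x) J

/-- The excess vector `γ(J) = (j_1 − 2j_2, …, j_{n−1} − 2j_n, j_n)`. -/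
def gammaVec : List ℕ → List ℕ
  | [] => []
  | [j] => [j]
  | j :: k :: rest => (j - 2 * k) :: gammaVec (k :: rest)

/-- `ξ̄_n = S_{(2^{n−1}, 2^{n−2}, …, 2, 1)}`. -/
noncomputable def xibar (n : ℕ) : F2D := sElem (((List.range n).map (2 ^ ·)).reverse)

/-- The monomial `ξ̄_1^{l_1} · ξ̄_2^{l_2} ⋯ ξ̄_n^{l_n}` for `L = (l_1,…,l_n)`. -/
noncomputable def xiMonomial (L : List ℕ) : F2D :=
  fprod (L.mapIdx fun i l => fpow (xibar (i + 1)) l)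

/-- "rightmost difference" strict comparison via `getD`. -/
def dlt (X Y : List ℕ) : Prop :=
  ∃ r, X.getD r 0 < Y.getD r 0 ∧ ∀ s, r < s → X.getD s 0 = Y.getD s 0

lemma lex_iff (u : List ℕ) : ∀ (v : List ℕ), u.length = v.length →
    (List.Lex (· < ·) u v ↔
      ∃ q, (∀ r, r < q → u.getD r 0 = v.getD r 0) ∧ u.getD q 0 < v.getD q 0) := by
  induction u with
  | nil =>
    intro v hv
    obtain rfl : v = [] := by cases v <;> simp_all
    constructor
    · intro h; cases h
    · rintro ⟨q, -, h2⟩; simp [List.getD] at h2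
  | cons a u ih =>
    intro v hv
    obtain ⟨b, v, rfl⟩ : ∃ b w, v = b :: w := by
      cases v with
      | nil => simp at hv
      | cons b w => exact ⟨b, w, rfl⟩
    have hlen : u.length = v.length := by simpa using hv
    constructor
    · intro h
      cases h with
      | rel h => exact ⟨0, by simp, by simpa using h⟩
      | cons h =>
        obtain ⟨q, h1, h2⟩ := (ih v hlen).1 h
        refine ⟨q + 1, ?_, by simpa using h2⟩
        intro r hr
        cases r with
        | zero => simp
        | succ r => simpa using h1 r (by omega)
    · rintro ⟨q, h1, h2⟩
      cases q with
      | zero =>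
        exact List.Lex.rel (by simpa using h2)
      | succ q =>
        have hab : a = b := by simpa using h1 0 (by omega)
        subst hab
        refine List.Lex.cons ?_
        refine (ih v hlen).2 ⟨q, ?_, by simpa using h2⟩
        intro r hr; simpa using h1 (r + 1) (by omega)

lemma getD_rev (X : List ℕ) (r : ℕ) (h : r < X.length) :
    X.reverse.getD r 0 = X.getD (X.length - 1 - r) 0 := by
  rw [List.getD_eq_getElem _ _ (by simpa using h), List.getD_eq_getElem _ _ (by omega)]
  exact List.getElem_reverse ..

lemma dlt_lt_length {X Y : List ℕ} (h : dlt X Y) :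
    ∃ r, r < Y.length ∧ X.getD r 0 < Y.getD r 0 ∧ ∀ s, r < s → X.getD s 0 = Y.getD s 0 := by
  obtain ⟨r, h1, h2⟩ := h
  refine ⟨r, ?_, h1, h2⟩
  by_contra hr
  have : Y.getD r 0 = 0 := List.getD_eq_default _ _ (by omega)
  omega

lemma rlt_iff_dlt {X Y : List ℕ} (h : X.length = Y.length) : rlt X Y ↔ dlt X Y := by
  unfold rlt
  have hrl : X.reverse.length = Y.reverse.length := by simpa using h
  rw [lex_iff _ _ hrl]
  constructor
  · rintro (hl | ⟨-, q, h1, h2⟩)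
    · omega
    · have hq : q < Y.length := by
        by_contra hq
        have : Y.reverse.getD q 0 = 0 := List.getD_eq_default _ _ (by simp; omega)
        omega
      refine ⟨Y.length - 1 - q, ?_, ?_⟩
      · have e1 := getD_rev X q (by omega)
        have e2 := getD_rev Y q hq
        rw [e1, e2] at h2
        have e3 : X.length - 1 - q = Y.length - 1 - q := by omega
        rw [e3] at h2
        exact h2
      · intro s hs
        rcases le_or_gt Y.length s with hle | hlt
        · rw [List.getD_eq_default X _ (by omega), List.getD_eq_default Y _ (by omega)]
        · have h3 := h1 (Y.length - 1 - s) (by omega)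
          rw [getD_rev X _ (by omega), getD_rev Y _ (by omega)] at h3
          have e1 : X.length - 1 - (Y.length - 1 - s) = s := by omega
          have e2 : Y.length - 1 - (Y.length - 1 - s) = s := by omega
          rw [e1, e2] at h3
          exact h3
  · intro hd
    obtain ⟨r, hr, h1, h2⟩ := dlt_lt_length hd
    refine Or.inr ⟨h, Y.length - 1 - r, ?_, ?_⟩
    · intro s hs
      have hsY : s < Y.length := by omega
      rw [getD_rev X s (by omega), getD_rev Y s hsY]
      have e1 : X.length - 1 - s = Y.length - 1 - s := by omega
      rw [e1]
      exact h2 _ (by omega)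
    · rw [getD_rev X _ (by omega), getD_rev Y _ (by omega)]
      have e1 : X.length - 1 - (Y.length - 1 - r) = r := by omega
      have e2 : Y.length - 1 - (Y.length - 1 - r) = r := by omega
      rw [e1, e2]
      exact h1

lemma rlt_of_length {X Y : List ℕ} (h : X.length < Y.length) : rlt X Y := Or.inl h

lemma rlt_length_le {X Y : List ℕ} (h : rlt X Y) : X.length ≤ Y.length := by
  rcases h with h | ⟨h, -⟩ <;> omega

lemma rlt_irrefl (X : List ℕ) : ¬ rlt X X := by
  intro h
  rcases h with h | ⟨-, h⟩
  · exact absurd h (lt_irrefl _)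
  · obtain ⟨r, h2, -⟩ := (rlt_iff_dlt (rfl : X.length = X.length)).1 (Or.inr ⟨rfl, h⟩)
    exact absurd h2 (lt_irrefl _)

lemma rlt_ne {X Y : List ℕ} (h : rlt X Y) : Y ≠ X := by
  intro e; subst e; exact rlt_irrefl _ h

lemma dlt_trans {X Y Z : List ℕ} (h1 : dlt X Y) (h2 : dlt Y Z) : dlt X Z := by
  obtain ⟨r1, ha1, ha2⟩ := h1
  obtain ⟨r2, hb1, hb2⟩ := h2
  refine ⟨max r1 r2, ?_, fun s hs => (ha2 s (by omega)).trans (hb2 s (by omega))⟩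
  rcases lt_trichotomy r1 r2 with h | h | h
  · rw [max_eq_right (by omega : r1 ≤ r2)]
    have := ha2 r2 (by omega); omega
  · subst h; simp only [max_self]; omega
  · rw [max_eq_left (by omega : r2 ≤ r1)]
    have := hb2 r1 (by omega); omega

lemma rlt_trans {X Y Z : List ℕ} (h1 : rlt X Y) (h2 : rlt Y Z) : rlt X Z := by
  have l1 := rlt_length_le h1
  have l2 := rlt_length_le h2
  rcases lt_or_eq_of_le (le_trans l1 l2) with h | h
  · exact Or.inl h
  · have e1 : X.length = Y.length := by omega
    have e2 : Y.length = Z.length := by omega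
    exact (rlt_iff_dlt (by omega)).2
      (dlt_trans ((rlt_iff_dlt e1).1 h1) ((rlt_iff_dlt e2).1 h2))

lemma rlt_cons {X Y : List ℕ} (x y : ℕ) (h : rlt X Y) : rlt (x :: X) (y :: Y) := by
  rcases h with h | ⟨h, hl⟩
  · exact Or.inl (by simpa using h)
  · refine (rlt_iff_dlt (by simpa using h)).2 ?_
    obtain ⟨r, h1, h2⟩ := (rlt_iff_dlt h).1 (Or.inr ⟨h, hl⟩)
    refine ⟨r + 1, by simpa using h1, ?_⟩
    intro s hs
    cases s with
    | zero => omega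
    | succ s => simpa using h2 s (by omega)

/-- `la M P`: add `P` into `M`, left aligned (sensible when `P.length ≤ M.length`). -/
def la (M P : List ℕ) : List ℕ := List.zipWith (· + ·) M P ++ M.drop P.length

lemma la_nil (M : List ℕ) : la M [] = M := by simp [la]

lemma la_cons (m p : ℕ) (M P : List ℕ) : la (m :: M) (p :: P) = (m + p) :: la M P := by
  simp [la]

lemma la_length {M P : List ℕ} (h : P.length ≤ M.length) : (la M P).length = M.length := by
  simp [la]; omega

lemma la_getD {M P : List ℕ} (h : P.length ≤ M.length) (r : ℕ) :
    (la M P).getD r 0 = M.getD r 0 + P.getD r 0 := by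
  induction M generalizing P r with
  | nil =>
    obtain rfl : P = [] := by cases P <;> simp_all
    simp [la]
  | cons m M ih =>
    cases P with
    | nil => rw [la_nil, List.getD_nil, Nat.add_zero]
    | cons p P =>
      rw [la_cons]
      cases r with
      | zero => rw [List.getD_cons_zero, List.getD_cons_zero, List.getD_cons_zero]
      | succ r =>
        rw [List.getD_cons_succ, List.getD_cons_succ, List.getD_cons_succ,
          ih (by simpa using h) r]

lemma list_ext_getD {X Y : List ℕ} (h : X.length = Y.length)
    (hg : ∀ s, X.getD s 0 = Y.getD s 0) : X = Y := by
  apply List.ext_getElem h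
  intro i h1 h2
  have := hg i
  rwa [List.getD_eq_getElem _ _ h1, List.getD_eq_getElem _ _ h2] at this

lemma shiftlt (A B : List ℕ) (a b : ℕ) (hpos : ∀ z ∈ b :: B, 0 < z)
    (hlen : (b :: B).length ≤ A.length) :
    rlt ((a + b) :: la A B) (a :: la A (b :: B)) := by
  have hB : B.length ≤ A.length := by simp at hlen; omega
  have hlen1 : ((a + b) :: la A B).length = (a :: la A (b :: B)).length := by
    simp [la_length hB, la_length hlen]
  refine (rlt_iff_dlt hlen1).2 ⟨B.length + 1, ?_, ?_⟩
  · have e1 : ((a + b) :: la A B).getD (B.length + 1) 0 = A.getD B.length 0 := by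
      rw [List.getD_cons_succ, la_getD hB, List.getD_eq_default B _ (le_refl _), Nat.add_zero]
    have e2 : (a :: la A (b :: B)).getD (B.length + 1) 0
        = A.getD B.length 0 + (b :: B).getD B.length 0 := by
      rw [List.getD_cons_succ, la_getD hlen]
    rw [e1, e2]
    have hmem : (b :: B).getD B.length 0 ∈ (b :: B) := by
      rw [List.getD_eq_getElem _ _ (by simp)]
      exact List.getElem_mem _
    have := hpos _ hmem
    omega
  · intro s hs
    obtain ⟨t, rfl⟩ : ∃ t, s = t + 1 := ⟨s - 1, by omega⟩
    have h1 : B.getD t 0 = 0 := List.getD_eq_default _ _ (by omega)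
    have h2 : (b :: B).getD t 0 = 0 := List.getD_eq_default _ _ (by simp; omega)
    rw [List.getD_cons_succ, List.getD_cons_succ, la_getD hB, la_getD hlen, h1, h2]

lemma la_lt {P M I J : List ℕ} (hPM : P.length ≤ M.length) (hMJ : M.length = J.length)
    (hIJ : I.length ≤ J.length) (hPI : P.length ≤ I.length)
    (hM : J = M ∨ rlt M J) (hI : I = P ∨ rlt P I) (hIpos : ∀ i ∈ I, 0 < i)
    (hne : ¬(I = P ∧ J = M)) : rlt (la M P) (la J I) := by
  have hm : (∀ s, M.getD s 0 = J.getD s 0) ∨ dlt M J := by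
    rcases hM with rfl | hM
    · exact Or.inl fun s => rfl
    · exact Or.inr ((rlt_iff_dlt hMJ).1 hM)
  have hi : (∀ s, P.getD s 0 = I.getD s 0) ∨ dlt P I := by
    rcases hI with rfl | hI
    · exact Or.inl fun s => rfl
    · right
      rcases lt_or_eq_of_le hPI with hlt | heq
      · refine ⟨I.length - 1, ?_, ?_⟩
        · have h1 : P.getD (I.length - 1) 0 = 0 := List.getD_eq_default _ _ (by omega)
          have h2 : 0 < I.getD (I.length - 1) 0 := by
            rw [List.getD_eq_getElem _ _ (by omega)]
            exact hIpos _ (List.getElem_mem _)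
          omega
        · intro s hs
          rw [List.getD_eq_default _ _ (by omega), List.getD_eq_default _ _ (by omega)]
      · exact (rlt_iff_dlt heq).1 hI
  have key : dlt (la M P) (la J I) := by
    rcases hm with hm | ⟨r2, hb1, hb2⟩
    · rcases hi with hi | ⟨r1, ha1, ha2⟩
      · exfalso
        apply hne
        constructor
        · -- I = P : lengths must agree
          have hlen : I.length = P.length := by
            rcases lt_or_eq_of_le hPI with hlt | heq
            · exfalso
              have h1 : P.getD (I.length - 1) 0 = 0 := List.getD_eq_default _ _ (by omega)
              have h2 : 0 < I.getD (I.length - 1) 0 := by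
                rw [List.getD_eq_getElem _ _ (by omega)]
                exact hIpos _ (List.getElem_mem _)
              have := hi (I.length - 1)
              omega
            · omega
          exact (list_ext_getD hlen.symm hi).symm
        · exact (list_ext_getD hMJ hm).symm
      · refine ⟨r1, ?_, ?_⟩
        · rw [la_getD hPM, la_getD hIJ]
          have := hm r1; omega
        · intro s hs
          rw [la_getD hPM, la_getD hIJ, hm s, ha2 s hs]
    · rcases hi with hi | ⟨r1, ha1, ha2⟩
      · refine ⟨r2, ?_, ?_⟩
        · rw [la_getD hPM, la_getD hIJ]
          have := hi r2; omega
        · intro s hs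
          rw [la_getD hPM, la_getD hIJ, hi s, hb2 s hs]
      · refine ⟨max r1 r2, ?_, ?_⟩
        · rw [la_getD hPM, la_getD hIJ]
          rcases lt_trichotomy r1 r2 with h | h | h
          · rw [max_eq_right (by omega : r1 ≤ r2)]
            have := ha2 r2 (by omega); omega
          · subst h; simp only [max_self]; omega
          · rw [max_eq_left (by omega : r2 ≤ r1)]
            have := hb2 r1 (by omega); omega
        · intro s hs
          rw [la_getD hPM, la_getD hIJ, ha2 s (by omega), hb2 s (by omega)]
  exact (rlt_iff_dlt (by rw [la_length hPM, la_length hIJ, hMJ])).2 key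

lemma osp_nil_right (A : List ℕ) : osp A [] = {A} := by cases A <;> simp [osp]
lemma osp_nil_left (B : List ℕ) : osp [] B = {B} := by cases B <;> simp [osp]
lemma osp_cons_cons (a b : ℕ) (A B : List ℕ) :
    osp (a :: A) (b :: B) = ((osp A (b :: B)).map (a :: ·)) +
      ((osp (a :: A) B).map (b :: ·)) + ((osp A B).map ((a + b) :: ·)) := by
  rw [osp]

lemma osp_length_aux : ∀ (n : ℕ) (A B K : List ℕ), A.length + B.length ≤ n →
    K ∈ osp A B → A.length ≤ K.length ∧ B.length ≤ K.length := by
  intro n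
  induction n with
  | zero =>
    intro A B K hn hK
    obtain rfl : A = [] := by cases A <;> simp_all
    obtain rfl : B = [] := by cases B <;> simp_all
    rw [osp_nil_right] at hK
    simp_all
  | succ n ih =>
    intro A B K hn hK
    cases B with
    | nil =>
      rw [osp_nil_right] at hK
      obtain rfl := Multiset.mem_singleton.1 hK
      simp
    | cons b B =>
      cases A with
      | nil =>
        rw [osp_nil_left] at hK
        obtain rfl := Multiset.mem_singleton.1 hK
        simp
      | cons a A =>
        rw [osp_cons_cons] at hK
        simp only [Multiset.mem_add, Multiset.mem_map] at hK
        rcases hK with (⟨K', hK', rfl⟩ | ⟨K', hK', rfl⟩) | ⟨K', hK', rfl⟩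
        · have := ih A (b :: B) K' (by simp at hn ⊢; omega) hK'
          simp at this ⊢; omega
        · have := ih (a :: A) B K' (by simp at hn ⊢; omega) hK'
          simp at this ⊢; omega
        · have := ih A B K' (by simp at hn ⊢; omega) hK'
          simp at this ⊢; omega

lemma osp_length {A B K : List ℕ} (hK : K ∈ osp A B) :
    A.length ≤ K.length ∧ B.length ≤ K.length :=
  osp_length_aux (A.length + B.length) A B K le_rfl hK

lemma osp_pos_aux : ∀ (n : ℕ) (A B K : List ℕ), A.length + B.length ≤ n →
    (∀ x ∈ A, 0 < x) → (∀ x ∈ B, 0 < x) → K ∈ osp A B → ∀ x ∈ K, 0 < x := by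
  intro n
  induction n with
  | zero =>
    intro A B K hn hA hB hK
    obtain rfl : A = [] := by cases A <;> simp_all
    obtain rfl : B = [] := by cases B <;> simp_all
    rw [osp_nil_right] at hK
    simp_all
  | succ n ih =>
    intro A B K hn hA hB hK
    cases B with
    | nil =>
      rw [osp_nil_right] at hK
      obtain rfl := Multiset.mem_singleton.1 hK
      exact hA
    | cons b B =>
      cases A with
      | nil =>
        rw [osp_nil_left] at hK
        obtain rfl := Multiset.mem_singleton.1 hK
        exact hB
      | cons a A =>
        rw [osp_cons_cons] at hK
        simp only [Multiset.mem_add, Multiset.mem_map] at hK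
        have ha := hA a (by simp)
        have hb := hB b (by simp)
        have hA' : ∀ x ∈ A, 0 < x := fun x hx => hA x (by simp [hx])
        have hB' : ∀ x ∈ B, 0 < x := fun x hx => hB x (by simp [hx])
        rcases hK with (⟨K', hK', rfl⟩ | ⟨K', hK', rfl⟩) | ⟨K', hK', rfl⟩
        · intro x hx
          rcases List.mem_cons.1 hx with rfl | hx
          · exact ha
          · exact ih A (b :: B) K' (by simp at hn ⊢; omega) hA' hB hK' x hx
        · intro x hx
          rcases List.mem_cons.1 hx with rfl | hx
          · exact hb
          · exact ih (a :: A) B K' (by simp at hn ⊢; omega) hA hB' hK' x hx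
        · intro x hx
          rcases List.mem_cons.1 hx with rfl | hx
          · omega
          · exact ih A B K' (by simp at hn ⊢; omega) hA' hB' hK' x hx

lemma osp_pos {A B K : List ℕ} (hA : ∀ x ∈ A, 0 < x) (hB : ∀ x ∈ B, 0 < x)
    (hK : K ∈ osp A B) : ∀ x ∈ K, 0 < x :=
  osp_pos_aux (A.length + B.length) A B K le_rfl hA hB hK

lemma osp_min_aux : ∀ (n : ℕ) (B A : List ℕ), B.length + A.length ≤ n →
    (∀ b ∈ B, 0 < b) → B.length ≤ A.length →
    ((osp B A).count (la A B) = 1 ∧ ∀ K ∈ osp B A, K = la A B ∨ rlt (la A B) K) := by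
  intro n
  induction n with
  | zero =>
    intro B A hn hB hBA
    obtain rfl : B = [] := by cases B <;> simp_all
    obtain rfl : A = [] := by cases A <;> simp_all
    rw [osp_nil_right, la_nil]
    simp
  | succ n ih =>
    intro B A hn hpos hBA
    cases B with
    | nil =>
      rw [osp_nil_left, la_nil]
      simp
    | cons b B =>
      cases A with
      | nil => simp at hBA
      | cons a A =>
        have hBA' : B.length ≤ A.length := by simp at hBA; omega
        rw [osp_cons_cons, la_cons]
        have hposB : ∀ x ∈ B, 0 < x := fun x hx => hpos x (by simp [hx])
        obtain ⟨ihc, ihm⟩ := ih B A (by simp at hn ⊢; omega) hposB hBA'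
        -- every element of branch 2 with minimal length is ≻ target
        have hbr2 : ∀ K' ∈ osp (b :: B) A, rlt ((a + b) :: la A B) (a :: K') := by
          intro K' hK'
          have hlen := osp_length hK'
          rcases lt_or_eq_of_le hlen.2 with hlt | heq
          · apply rlt_of_length
            have := la_length hBA'
            simp [this]
            omega
          · -- K' has length = A.length, so (b::B).length ≤ A.length
            have hbBA : (b :: B).length ≤ A.length := by
              have := hlen.1; omega
            obtain ⟨-, ihm2⟩ := ih (b :: B) A (by simp at hn ⊢; omega) hpos hbBA
            have hshift := shiftlt A B a b hpos hbBA
            rcases ihm2 K' hK' with rfl | hK'lt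
            · exact hshift
            · refine rlt_trans hshift (rlt_cons a a ?_)
              exact hK'lt
        have hbr1 : ∀ K' ∈ osp B (a :: A), rlt ((a + b) :: la A B) (b :: K') := by
          intro K' hK'
          have hlen := osp_length hK'
          apply rlt_of_length
          have := la_length hBA'
          simp [this] at hlen ⊢
          omega
        have hbr3 : ∀ K' ∈ osp B A, (b + a) :: K' = (a + b) :: la A B ∨
            rlt ((a + b) :: la A B) ((b + a) :: K') := by
          intro K' hK'
          rcases ihm K' hK' with rfl | hlt
          · left; rw [Nat.add_comm]
          · right
            have : rlt ((a + b) :: la A B) ((b + a) :: K') := rlt_cons _ _ hlt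
            exact this
        constructor
        · rw [Multiset.count_add, Multiset.count_add]
          have c1 : Multiset.count ((a + b) :: la A B) ((osp B (a :: A)).map (b :: ·)) = 0 := by
            rw [Multiset.count_eq_zero]
            intro hmem
            obtain ⟨K', hK', hEq⟩ := Multiset.mem_map.1 hmem
            exact (rlt_ne (hbr1 K' hK')) hEq
          have c2 : Multiset.count ((a + b) :: la A B) ((osp (b :: B) A).map (a :: ·)) = 0 := by
            rw [Multiset.count_eq_zero]
            intro hmem
            obtain ⟨K', hK', hEq⟩ := Multiset.mem_map.1 hmem
            exact (rlt_ne (hbr2 K' hK')) hEq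
          have c3 : Multiset.count ((a + b) :: la A B) ((osp B A).map ((b + a) :: ·)) = 1 := by
            have : (a + b) :: la A B = (b + a) :: la A B := by rw [Nat.add_comm]
            rw [this, Multiset.count_map_eq_count' _ _ (fun x y hxy => by simpa using hxy)]
            exact ihc
          rw [c1, c2]
          have e : b + a = a + b := Nat.add_comm b a
          rw [← e] at c3 ⊢
          rw [c3]
        · intro K hK
          simp only [Multiset.mem_add, Multiset.mem_map] at hK
          rcases hK with (⟨K', hK', rfl⟩ | ⟨K', hK', rfl⟩) | ⟨K', hK', rfl⟩
          · exact Or.inr (hbr1 K' hK')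
          · exact Or.inr (hbr2 K' hK')
          · rcases hbr3 K' hK' with h | h
            · exact Or.inl h
            · exact Or.inr h

lemma osp_min {B A : List ℕ} (hpos : ∀ b ∈ B, 0 < b) (h : B.length ≤ A.length) :
    ((osp B A).count (la A B) = 1 ∧ ∀ K ∈ osp B A, K = la A B ∨ rlt (la A B) K) :=
  osp_min_aux (B.length + A.length) B A le_rfl hpos h

/-- x is S_M plus strictly rlt-larger terms, all with positive entries. -/
def GoodP (M : List ℕ) (x : F2D) : Prop :=
  x M = 1 ∧ (∀ I, x I ≠ 0 → I = M ∨ rlt M I) ∧ (∀ I, x I ≠ 0 → ∀ i ∈ I, 0 < i)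

lemma ofMS_apply (m : Multiset (List ℕ)) (C : List ℕ) :
    ofMS m C = ((m.count C : ℕ) : ZMod 2) := by
  induction m using Multiset.induction with
  | empty => simp [ofMS]
  | cons a m ih =>
    have : ofMS (a ::ₘ m) = sElem a + ofMS m := by
      rw [ofMS, Multiset.map_cons, Multiset.sum_cons]; rfl
    rw [this, Finsupp.add_apply, ih, Multiset.count_cons]
    push_cast
    rw [sElem, Finsupp.single_apply]
    rcases eq_or_ne C a with rfl | hne
    · simp [add_comm]
    · simp [hne, Ne.symm hne]

lemma fmul_apply (x y : F2D) (C : List ℕ) :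
    fmul x y C = ∑ I ∈ x.support, ∑ J ∈ y.support,
      (x I * y J) * ((osp I J).count C : ZMod 2) := by
  rw [fmul, Finsupp.sum, Finsupp.finset_sum_apply]
  refine Finset.sum_congr rfl fun I _ => ?_
  rw [Finsupp.sum, Finsupp.finset_sum_apply]
  refine Finset.sum_congr rfl fun J _ => ?_
  rw [Finsupp.smul_apply, ofMS_apply, smul_eq_mul]

lemma sElem_goodP {B : List ℕ} (hpos : ∀ b ∈ B, 0 < b) : GoodP B (sElem B) := by
  refine ⟨by simp [sElem], fun I hI => ?_, fun I hI => ?_⟩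
  · left
    by_contra hne
    exact hI (by rw [sElem, Finsupp.single_apply, if_neg (fun h => hne h.symm)])
  · have : I = B := by
      by_contra hne
      exact hI (by rw [sElem, Finsupp.single_apply, if_neg (fun h => hne h.symm)])
    subst this; exact hpos

lemma fmul_one_left (y : F2D) : fmul (sElem []) y = y := by
  rw [fmul, sElem, Finsupp.sum_single_index]
  · have : (fun J (b : ZMod 2) => (1 * b) • ofMS (osp [] J))
        = fun J b => Finsupp.single J b := by
      funext J b
      rw [one_mul, osp_nil_left, ofMS, Multiset.map_singleton, Multiset.sum_singleton,
        sElem, Finsupp.smul_single, smul_eq_mul, mul_one]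
    rw [this, Finsupp.sum_single]
  · simp

lemma fmul_one_right (x : F2D) : fmul x (sElem []) = x := by
  rw [fmul]
  have : (fun I (a : ZMod 2) => Finsupp.sum (sElem []) fun J b => (a * b) • ofMS (osp I J))
      = fun I a => Finsupp.single I a := by
    funext I a
    rw [sElem, Finsupp.sum_single_index (by simp)]
    rw [mul_one, osp_nil_right, ofMS, Multiset.map_singleton, Multiset.sum_singleton,
      sElem, Finsupp.smul_single, smul_eq_mul, mul_one]
  rw [this, Finsupp.sum_single]

lemma osp_master {P M I J C : List ℕ}
    (hIpos : ∀ x ∈ I, 0 < x) (hJpos : ∀ x ∈ J, 0 < x)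
    (hPM : P.length ≤ M.length)
    (hI : I = P ∨ rlt P I) (hJ : J = M ∨ rlt M J)
    (hC : C ∈ osp I J) :
    (C = la M P ∧ I = P ∧ J = M) ∨ rlt (la M P) C := by
  have hCl := osp_length hC
  have hlaM := la_length hPM
  rcases lt_or_ge M.length C.length with hlen | hlen
  · exact Or.inr (rlt_of_length (by omega))
  · -- C.length ≤ M.length; derive |J| = |M| = |C|
    have hJM : M.length ≤ J.length := by
      rcases hJ with rfl | hJ
      · exact le_rfl
      · exact rlt_length_le hJ
    have hJlen : J.length = M.length := by omega
    have hClen : C.length = M.length := by omega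
    have hIJ : I.length ≤ J.length := by omega
    have hPI : P.length ≤ I.length := by
      rcases hI with rfl | hI
      · exact le_rfl
      · exact le_trans (rlt_length_le hI) le_rfl |>.trans (le_refl _) |>.trans
          (le_of_eq rfl) |>.trans (le_refl _) |>.trans (by exact le_rfl)
    obtain ⟨-, hmin⟩ := osp_min hIpos hIJ
    by_cases hPMeq : I = P ∧ J = M
    · obtain ⟨rfl, rfl⟩ := hPMeq
      rcases hmin C hC with rfl | hlt
      · exact Or.inl ⟨rfl, rfl, rfl⟩
      · exact Or.inr hlt
    · right
      have hlt : rlt (la M P) (la J I) :=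
        la_lt hPM hJlen.symm hIJ hPI hJ hI hIpos hPMeq
      rcases hmin C hC with rfl | hlt2
      · exact hlt
      · exact rlt_trans hlt hlt2

lemma mul_step {P M : List ℕ} {x y : F2D} (hPM : P.length ≤ M.length)
    (hx : GoodP P x) (hy : GoodP M y) : GoodP (la M P) (fmul x y) := by
  obtain ⟨hx1, hx2, hx3⟩ := hx
  obtain ⟨hy1, hy2, hy3⟩ := hy
  have hPmem : P ∈ x.support := Finsupp.mem_support_iff.2 (by rw [hx1]; exact one_ne_zero)
  have hMmem : M ∈ y.support := Finsupp.mem_support_iff.2 (by rw [hy1]; exact one_ne_zero)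
  have hPpos : ∀ i ∈ P, 0 < i := hx3 P (by rw [hx1]; exact one_ne_zero)
  have hMpos : ∀ i ∈ M, 0 < i := hy3 M (by rw [hy1]; exact one_ne_zero)
  have master : ∀ I ∈ x.support, ∀ J ∈ y.support, ∀ C, C ∈ osp I J →
      (C = la M P ∧ I = P ∧ J = M) ∨ rlt (la M P) C := by
    intro I hI J hJ C hC
    exact osp_master (hx3 I (Finsupp.mem_support_iff.1 hI))
      (hy3 J (Finsupp.mem_support_iff.1 hJ)) hPM
      (hx2 I (Finsupp.mem_support_iff.1 hI)) (hy2 J (Finsupp.mem_support_iff.1 hJ)) hC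
  refine ⟨?_, ?_, ?_⟩
  · rw [fmul_apply]
    rw [Finset.sum_eq_single_of_mem P hPmem ?side1]
    · rw [Finset.sum_eq_single_of_mem M hMmem ?side2]
      · rw [hx1, hy1, (osp_min hPpos hPM).1]
        norm_num
      case side2 =>
        intro J hJ hne
        have : (osp P J).count (la M P) = 0 := by
          rw [Multiset.count_eq_zero]
          intro hmem
          rcases master P hPmem J hJ _ hmem with ⟨-, -, h⟩ | h
          · exact hne h
          · exact rlt_irrefl _ h
        rw [this]
        norm_num
    case side1 =>
      intro I hI hne
      apply Finset.sum_eq_zero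
      intro J hJ
      have : (osp I J).count (la M P) = 0 := by
        rw [Multiset.count_eq_zero]
        intro hmem
        rcases master I hI J hJ _ hmem with ⟨-, h, -⟩ | h
        · exact hne h
        · exact rlt_irrefl _ h
      rw [this]
      norm_num
  · intro C hC
    rw [fmul_apply] at hC
    obtain ⟨I, hI, hI2⟩ := Finset.exists_ne_zero_of_sum_ne_zero hC
    obtain ⟨J, hJ, hJ2⟩ := Finset.exists_ne_zero_of_sum_ne_zero hI2
    have hmem : C ∈ osp I J := by
      rw [← Multiset.count_pos]
      by_contra h
      have : (osp I J).count C = 0 := by omega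
      rw [this] at hJ2
      norm_num at hJ2
    rcases master I hI J hJ C hmem with ⟨rfl, -, -⟩ | h
    · exact Or.inl rfl
    · exact Or.inr h
  · intro C hC
    rw [fmul_apply] at hC
    obtain ⟨I, hI, hI2⟩ := Finset.exists_ne_zero_of_sum_ne_zero hC
    obtain ⟨J, hJ, hJ2⟩ := Finset.exists_ne_zero_of_sum_ne_zero hI2
    have hmem : C ∈ osp I J := by
      rw [← Multiset.count_pos]
      by_contra h
      have : (osp I J).count C = 0 := by omega
      rw [this] at hJ2
      norm_num at hJ2
    exact osp_pos (hx3 I (Finsupp.mem_support_iff.1 hI))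
      (hy3 J (Finsupp.mem_support_iff.1 hJ)) hmem

/-- the ramp `(j·2^(n-1), …, 2j, j)`. -/
def R (n j : ℕ) : List ℕ := ((List.range n).map fun i => j * 2 ^ i).reverse

lemma R_length (n j : ℕ) : (R n j).length = n := by simp [R]

lemma R_pos {n j : ℕ} (hj : 0 < j) : ∀ x ∈ R n j, 0 < x := by
  intro x hx
  simp only [R, List.mem_reverse, List.mem_map, List.mem_range] at hx
  obtain ⟨i, -, rfl⟩ := hx
  positivity

lemma R_succ_high (n j : ℕ) : R (n + 1) j = (j * 2 ^ n) :: R n j := by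
  simp [R, List.range_succ]

lemma R_succ_low (n j : ℕ) : R (n + 1) j = R n (2 * j) ++ [j] := by
  rw [R, List.range_succ_eq_map, List.map_cons, List.map_map, List.reverse_cons]
  congr 1
  · rw [R]
    congr 1
    apply List.map_congr_left
    intro i _
    simp only [Function.comp, pow_succ]
    ring
  · simp

lemma la_R (n a b : ℕ) : la (R n a) (R n b) = R n (a + b) := by
  induction n with
  | zero => simp [R, la_nil]
  | succ n ih =>
    rw [R_succ_high, R_succ_high, R_succ_high, la_cons, ih]
    congr 1
    ring

lemma la_R_append (n : ℕ) : ∀ (t l : ℕ) (T : List ℕ),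
    la (R (n + 1) t ++ T) (R n l) = R n (l + 2 * t) ++ t :: T := by
  induction n with
  | zero =>
    intro t l T
    have h0 : R 0 l = [] := rfl
    have h1 : R 1 t = [t] := by simp [R, List.range_succ]
    rw [h0, la_nil, h1]
    simp [R, List.range_succ]
  | succ n ih =>
    intro t l T
    rw [R_succ_high (n+1) t, R_succ_high n l, List.cons_append, la_cons, ih,
      R_succ_high n (l + 2*t), List.cons_append]
    congr 2
    ring

lemma xibar_eq (n : ℕ) : xibar n = sElem (R n 1) := by
  rw [xibar, R]
  congr 2
  simp

lemma pow_goodP (k : ℕ) : ∀ l : ℕ, 0 < l → GoodP (R k l) (fpow (xibar k) l) := by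
  intro l
  induction l with
  | zero => omega
  | succ l ih =>
    intro _
    rcases Nat.eq_zero_or_pos l with rfl | hl
    · show GoodP (R k 1) (fmul (xibar k) (fpow (xibar k) 0))
      rw [show fpow (xibar k) 0 = sElem [] from rfl, fmul_one_right, xibar_eq]
      exact sElem_goodP (R_pos one_pos)
    · show GoodP (R k (l+1)) (fmul (xibar k) (fpow (xibar k) l))
      have := mul_step (P := R k 1) (M := R k l)
        (by rw [R_length, R_length]) (xibar_eq k ▸ sElem_goodP (R_pos one_pos)) (ih hl)
      rw [la_R] at this
      exact this

noncomputable def fprodFrom (k : ℕ) (L : List ℕ) : F2D :=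
  fprod (L.mapIdx fun i l => fpow (xibar (k + i + 1)) l)

lemma fprodFrom_nil (k : ℕ) : fprodFrom k [] = sElem [] := rfl

lemma fprodFrom_cons (k l : ℕ) (L : List ℕ) :
    fprodFrom k (l :: L) = fmul (fpow (xibar (k + 1)) l) (fprodFrom (k + 1) L) := by
  have hf : (fun i l' => fpow (xibar (k + (i + 1) + 1)) l')
      = (fun i l' => fpow (xibar (k + 1 + i + 1)) l') := by
    funext i l'
    rw [show k + (i + 1) + 1 = k + 1 + i + 1 by omega]
  rw [fprodFrom, List.mapIdx_cons, fprod, fprodFrom, hf, show k + 0 + 1 = k + 1 by omega]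

def minSeq (k : ℕ) : List ℕ → List ℕ
  | [] => []
  | j :: T => R (k + 1) j ++ T

lemma gammaVec_cons (j : ℕ) (T : List ℕ) :
    gammaVec (j :: T) = (j - 2 * T.headD 0) :: gammaVec T := by
  cases T <;> rfl

lemma main_aux (T : List ℕ) : ∀ (k : ℕ), (∀ j ∈ T, 0 < j) →
    List.Chain' (fun x y => 2 * y ≤ x) T →
    GoodP (minSeq k T) (fprodFrom k (gammaVec T)) := by
  induction T with
  | nil =>
    intro k _ _
    rw [show gammaVec [] = [] from rfl, fprodFrom_nil]
    exact sElem_goodP (by intro b hb; cases hb)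
  | cons j T ih =>
    intro k hpos hchain
    rw [gammaVec_cons, fprodFrom_cons]
    cases T with
    | nil =>
      rw [show ([] : List ℕ).headD 0 = 0 from rfl, show gammaVec [] = [] from rfl,
        fprodFrom_nil, fmul_one_right, show j - 2 * 0 = j by omega]
      have hj : 0 < j := hpos j (by simp)
      have := pow_goodP (k + 1) j hj
      rw [show minSeq k [j] = R (k+1) j ++ [] from rfl, List.append_nil]
      exact this
    | cons t T' =>
      have ht : 0 < t := hpos t (by simp)
      have hch : 2 * t ≤ j := (List.isChain_cons_cons.1 hchain).1
      have hchain' := (List.isChain_cons_cons.1 hchain).2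
      have hpos' : ∀ x ∈ t :: T', 0 < x := fun x hx => hpos x (List.mem_cons_of_mem _ hx)
      have ihT := ih (k + 1) hpos' hchain'
      rw [show (t :: T').headD 0 = t from rfl]
      rcases Nat.eq_zero_or_pos (j - 2 * t) with hl | hl
      · have hj2 : j = 2 * t := by omega
        rw [hl, show fpow (xibar (k+1)) 0 = sElem [] from rfl, fmul_one_left]
        have hms : minSeq k (j :: t :: T') = minSeq (k + 1) (t :: T') := by
          show R (k+1) j ++ t :: T' = R (k+2) t ++ T'
          rw [show k + 2 = (k+1) + 1 from rfl, R_succ_low (k+1) t, hj2]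
          simp
        rw [hms]
        exact ihT
      · have hP := pow_goodP (k + 1) (j - 2 * t) hl
        have hlen : (R (k+1) (j - 2*t)).length ≤ (minSeq (k+1) (t :: T')).length := by
          show _ ≤ (R (k+2) t ++ T').length
          rw [R_length, List.length_append, R_length]
          omega
        have hres := mul_step hlen hP ihT
        have hla : la (minSeq (k + 1) (t :: T')) (R (k + 1) (j - 2 * t))
            = minSeq k (j :: t :: T') := by
          show la (R (k + 2) t ++ T') (R (k + 1) (j - 2*t)) = R (k+1) j ++ t :: T'
          rw [show k + 2 = (k+1) + 1 from rfl, la_R_append, show j - 2*t + 2*t = j by omega]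
        rw [hla] at hres
        exact hres

/-- For an admissible sequence `J` with excess vector `γ(J) = (l_1,…,l_n)`,
the monomial `ξ̄_1^{l_1} ⋯ ξ̄_n^{l_n}` in `𝓕₂*` equals `S_J` plus a sum of
basis elements `S_I` with `I > J` in the right lexicographic order; in
particular its coefficient at `S_J` is `1` and its coefficient at `S_I`
vanishes for every `I < J`. -/
theorem xiMonomial_triangular (J : List ℕ) (hJ : Admissible J) :
    (xiMonomial (gammaVec J)) J = 1 ∧
    ∀ I : List ℕ, (xiMonomial (gammaVec J)) I ≠ 0 → I = J ∨ rlt J I := by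
  obtain ⟨hpos, hchain⟩ := hJ
  have hmain := main_aux J 0 hpos hchain
  have e1 : fprodFrom 0 (gammaVec J) = xiMonomial (gammaVec J) := by
    have hf : (fun i l => fpow (xibar (0 + i + 1)) l)
        = (fun (i : ℕ) (l : ℕ) => fpow (xibar (i + 1)) l) := by
      funext i l
      rw [Nat.zero_add]
    rw [fprodFrom, xiMonomial, hf]
  have e2 : minSeq 0 J = J := by
    cases J with
    | nil => rfl
    | cons j T =>
      show R 1 j ++ T = j :: T
      simp [R, List.range_succ]
  rw [e1, e2] at hmain
  exact ⟨hmain.1, hmain.2.1⟩
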